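/- Let F : (0,∞) → ℝ^N be differentiable with 0 < F_i(x) < 1/α for all i and x, and suppose F solves the planar stationary system B F′(x) = Q^α(F(x)), where B = diag(p_1^1,…,p_N^1). Define the modified H-functional H̃[F](x) = Σ_{i=1}^N p_i^1 μ(F_i(x)). Then H̃[F] is differentiable with d/dx H̃[F](x) = ⟨log(F(x)/Ψ_α(F(x))), Q^α(F(x))⟩ ≤ 0 for all x > 0; in particular H̃[F] is non-increasing. -/

import Mathlib

open Real Finset Filter Set

noncomputable def Psi (α y : ℝ) : ℝ :=
  (1 - α * y) ^ α * (1 + (1 - α) * y) ^ (1 - α)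

noncomputable def Qop {N : ℕ} (α : ℝ) (Γ : Fin N → Fin N → Fin N → Fin N → ℝ)
    (F : Fin N → ℝ) : Fin N → ℝ := fun i =>
  ∑ j, ∑ k, ∑ l, Γ i j k l *
    (F k * F l * Psi α (F i) * Psi α (F j) - F i * F j * Psi α (F k) * Psi α (F l))

def dotN {N : ℕ} (u v : Fin N → ℝ) : ℝ := ∑ i, u i * v i

def GammaOK {N d : ℕ} (p : Fin N → Fin d → ℝ)
    (Γ : Fin N → Fin N → Fin N → Fin N → ℝ) : Prop :=
  (∀ i j k l, 0 ≤ Γ i j k l) ∧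
  (∀ i j k l, Γ i j k l = Γ j i k l) ∧
  (∀ i j k l, Γ i j k l = Γ k l i j) ∧
  (∀ i j k l, Γ i j k l ≠ 0 →
    (∀ m, p i m + p j m = p k m + p l m) ∧
    (∑ m, (p i m) ^ 2) + (∑ m, (p j m) ^ 2) = (∑ m, (p k m) ^ 2) + (∑ m, (p l m) ^ 2))

def IsCollInv {N : ℕ} (Γ : Fin N → Fin N → Fin N → Fin N → ℝ) (φ : Fin N → ℝ) : Prop :=
  ∀ i j k l, Γ i j k l ≠ 0 → φ i + φ j = φ k + φ l

def IsNormal {N d : ℕ} (p : Fin N → Fin d → ℝ)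
    (Γ : Fin N → Fin N → Fin N → Fin N → ℝ) : Prop :=
  ∀ φ : Fin N → ℝ, IsCollInv Γ φ →
    ∃ (a c : ℝ) (b : Fin d → ℝ), ∀ i, φ i = a + (∑ m, b m * p i m) + c * ∑ m, (p i m) ^ 2

def IsEquilib {N d : ℕ} (α : ℝ) (p : Fin N → Fin d → ℝ) (P : Fin N → ℝ) : Prop :=
  (∀ i, 0 < P i ∧ P i < 1 / α) ∧
  ∃ (K : ℝ) (b : Fin d → ℝ) (c : ℝ), 0 < K ∧
    ∀ i, P i / Psi α (P i) = K * Real.exp (-(∑ m, b m * p i m) - c * ∑ m, (p i m) ^ 2)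

noncomputable def muF (α y : ℝ) : ℝ :=
  y * Real.log y + (1 - α * y) * Real.log (1 - α * y)
    - (1 + (1 - α) * y) * Real.log (1 + (1 - α) * y)

noncomputable def Rfun {N : ℕ} (α : ℝ) (P : Fin N → ℝ) (i : Fin N) : ℝ :=
  P i * (1 - α * P i) * (1 + (1 - α) * P i)

noncomputable def Pcoef {N : ℕ} (α : ℝ) (P : Fin N → ℝ) (i j k l : Fin N) : ℝ :=
  P i * P j * Psi α (P k) * Psi α (P l) / Real.sqrt (Rfun α P i)

noncomputable def Lop {N : ℕ} (α : ℝ) (Γ : Fin N → Fin N → Fin N → Fin N → ℝ)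
    (P : Fin N → ℝ) (f : Fin N → ℝ) : Fin N → ℝ := fun i =>
  ∑ j, ∑ k, ∑ l, Γ i j k l / Real.sqrt (Rfun α P i) *
    (Pcoef α P i j k l * f i + Pcoef α P j i k l * f j
      - Pcoef α P k l i j * f k - Pcoef α P l k i j * f l)

/-!
The derivative of `μ` is `log (y / Ψ_α(y))`, so by the chain rule and `B F' = Q^α(F)` the
derivative of `H̃[F]` is the entropy production `⟨log (F / Ψ_α(F)), Q^α(F)⟩`. By the symmetries
of `Γ` this is a quarter of `∑ Γ_{ij}^{kl} (g_{ijkl} - g_{klij}) (log g_{klij} - log g_{ijkl})`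
with `g_{ijkl} = F_k F_l Ψ_α(F_i) Ψ_α(F_j)`, and every term is `≤ 0` because `log` is increasing.
-/

lemma one_sub_mul_pos_of_lt_one_div {α y : ℝ} (hα : 0 < α) (hy : y < 1 / α) :
    0 < 1 - α * y := by
  rw [lt_div_iff₀ hα, mul_comm] at hy
  linarith

lemma one_add_mul_pos_of_le_one {α y : ℝ} (hα : α ≤ 1) (hy : 0 ≤ y) :
    0 < 1 + (1 - α) * y := by
  nlinarith

lemma Psi_pos {α y : ℝ} (h₁ : 0 < 1 - α * y) (h₂ : 0 < 1 + (1 - α) * y) : 0 < Psi α y :=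
  mul_pos (rpow_pos_of_pos h₁ _) (rpow_pos_of_pos h₂ _)

lemma log_div_Psi {α y : ℝ} (hy : y ≠ 0) (h₁ : 0 < 1 - α * y) (h₂ : 0 < 1 + (1 - α) * y) :
    log (y / Psi α y) = log y - α * log (1 - α * y) - (1 - α) * log (1 + (1 - α) * y) := by
  rw [log_div hy (Psi_pos h₁ h₂).ne', Psi,
    log_mul (rpow_pos_of_pos h₁ _).ne' (rpow_pos_of_pos h₂ _).ne', log_rpow h₁, log_rpow h₂]
  ring

lemma hasDerivAt_mul_log_comp {f : ℝ → ℝ} {v x : ℝ} (hf : HasDerivAt f v x) (h₀ : f x ≠ 0) :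
    HasDerivAt (fun t => f t * log (f t)) ((log (f x) + 1) * v) x :=
  (hasDerivAt_mul_log h₀).comp x hf

lemma hasDerivAt_muF_comp {α : ℝ} {f : ℝ → ℝ} {v x : ℝ} (hf : HasDerivAt f v x) (h₀ : f x ≠ 0)
    (h₁ : 0 < 1 - α * f x) (h₂ : 0 < 1 + (1 - α) * f x) :
    HasDerivAt (fun t => muF α (f t)) (log (f x / Psi α (f x)) * v) x := by
  have hfermi := hasDerivAt_mul_log_comp ((hf.const_mul α).const_sub 1) h₁.ne'
  have hbose := hasDerivAt_mul_log_comp ((hf.const_mul (1 - α)).const_add 1) h₂.ne'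
  exact ((hasDerivAt_mul_log_comp hf h₀).fun_add hfermi).fun_sub hbose |>.congr_deriv <| by
    rw [log_div_Psi h₀ h₁ h₂]
    ring

lemma sub_mul_log_sub_log_nonpos {a b : ℝ} (ha : 0 < a) (hb : 0 < b) :
    (a - b) * (log b - log a) ≤ 0 := by
  rcases le_total a b with h | h
  · exact mul_nonpos_of_nonpos_of_nonneg (sub_nonpos.2 h) (sub_nonneg.2 (log_le_log ha h))
  · exact mul_nonpos_of_nonneg_of_nonpos (sub_nonneg.2 h) (sub_nonpos.2 (log_le_log hb h))

lemma log_mul_four {a b c e : ℝ} (ha : 0 < a) (hb : 0 < b) (hc : 0 < c) (he : 0 < e) :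
    log (a * b * c * e) = log a + log b + log c + log e := by
  rw [log_mul (by positivity) he.ne', log_mul (by positivity) hc.ne', log_mul ha.ne' hb.ne']

section Symmetrization

variable {ι R : Type*} [Fintype ι] [CommRing R]

lemma sum_comm_pairs (g : ι → ι → ι → ι → R) :
    ∑ i, ∑ j, ∑ k, ∑ l, g i j k l = ∑ i, ∑ j, ∑ k, ∑ l, g k l i j := by
  calc ∑ i, ∑ j, ∑ k, ∑ l, g i j k l
      = ∑ i, ∑ k, ∑ j, ∑ l, g i j k l := sum_congr rfl fun _ _ => sum_comm
    _ = ∑ i, ∑ k, ∑ l, ∑ j, g i j k l :=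
        sum_congr rfl fun _ _ => sum_congr rfl fun _ _ => sum_comm
    _ = ∑ k, ∑ i, ∑ l, ∑ j, g i j k l := sum_comm
    _ = ∑ k, ∑ l, ∑ i, ∑ j, g i j k l := sum_congr rfl fun _ _ => sum_comm

lemma four_mul_sum_mul_eq_sum_mul_add_sub_sub (w : ι → ι → ι → ι → R)
    (hswap : ∀ i j k l, w j i k l = w i j k l) (hanti : ∀ i j k l, w k l i j = -w i j k l)
    (φ : ι → R) :
    4 * ∑ i, ∑ j, ∑ k, ∑ l, w i j k l * φ i
      = ∑ i, ∑ j, ∑ k, ∑ l, w i j k l * (φ i + φ j - φ k - φ l) := by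
  set S := ∑ i, ∑ j, ∑ k, ∑ l, w i j k l * φ i
  have hswap' : ∀ i j k l, w i j l k = w i j k l := fun i j k l => by
    rw [← neg_neg (w i j l k), ← hanti, hswap, hanti, neg_neg]
  have hj : ∑ i, ∑ j, ∑ k, ∑ l, w i j k l * φ j = S := by
    rw [sum_comm]
    exact sum_congr rfl fun i _ => sum_congr rfl fun j _ => sum_congr rfl fun k _ =>
      sum_congr rfl fun l _ => by rw [hswap]
  have hk : ∑ i, ∑ j, ∑ k, ∑ l, w i j k l * φ k = -S := by
    rw [sum_comm_pairs]
    simp only [← sum_neg_distrib, S]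
    exact sum_congr rfl fun i _ => sum_congr rfl fun j _ => sum_congr rfl fun k _ =>
      sum_congr rfl fun l _ => by rw [hanti, neg_mul]
  have hl : ∑ i, ∑ j, ∑ k, ∑ l, w i j k l * φ l = -S := by
    rw [← hk]
    exact sum_congr rfl fun i _ => sum_congr rfl fun j _ => by
      rw [sum_comm]
      exact sum_congr rfl fun k _ => sum_congr rfl fun l _ => by rw [hswap']
  simp only [mul_sub, mul_add, sum_add_distrib, sum_sub_distrib, hj, hk, hl]
  ring

end Symmetrization

theorem dotN_log_div_Psi_Qop_nonpos {N : ℕ} {α : ℝ} {Γ : Fin N → Fin N → Fin N → Fin N → ℝ}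
    (hΓ : ∀ i j k l, 0 ≤ Γ i j k l) (hΓswap : ∀ i j k l, Γ i j k l = Γ j i k l)
    (hΓpairs : ∀ i j k l, Γ i j k l = Γ k l i j) {P : Fin N → ℝ} (hP : ∀ i, 0 < P i)
    (hΨ : ∀ i, 0 < Psi α (P i)) :
    dotN (fun i => log (P i / Psi α (P i))) (Qop α Γ P) ≤ 0 := by
  set φ : Fin N → ℝ := fun i => log (P i / Psi α (P i))
  set gain : Fin N → Fin N → Fin N → Fin N → ℝ := fun i j k l =>
    P k * P l * Psi α (P i) * Psi α (P j)
  set w : Fin N → Fin N → Fin N → Fin N → ℝ := fun i j k l =>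
    Γ i j k l * (gain i j k l - gain k l i j)
  have hdot : dotN φ (Qop α Γ P) = ∑ i, ∑ j, ∑ k, ∑ l, w i j k l * φ i := by
    simp only [dotN, Qop, mul_sum]
    exact sum_congr rfl fun i _ => sum_congr rfl fun j _ => sum_congr rfl fun k _ =>
      sum_congr rfl fun l _ => by simp only [w, gain]; ring
  have hsym := four_mul_sum_mul_eq_sum_mul_add_sub_sub w
    (fun i j k l => by simp only [w, gain]; rw [← hΓswap]; ring)
    (fun i j k l => by simp only [w]; rw [← hΓpairs]; ring) φ
  have hgain : ∀ i j k l, 0 < gain i j k l := fun i j k l => by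
    have := hP k; have := hP l; have := hΨ i; have := hΨ j
    positivity
  have hφ : ∀ i j k l, φ i + φ j - φ k - φ l = log (gain k l i j) - log (gain i j k l) := by
    intro i j k l
    simp only [gain]
    rw [log_mul_four (hP k) (hP l) (hΨ i) (hΨ j),
      log_mul_four (hP i) (hP j) (hΨ k) (hΨ l)]
    simp only [φ, log_div (hP _).ne' (hΨ _).ne']
    ring
  have hterm : ∀ i j k l, w i j k l * (φ i + φ j - φ k - φ l) ≤ 0 := by
    intro i j k l
    rw [hφ, mul_assoc]
    exact mul_nonpos_of_nonneg_of_nonpos (hΓ i j k l)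
      (sub_mul_log_sub_log_nonpos (hgain i j k l) (hgain k l i j))
  have hsum : ∑ i, ∑ j, ∑ k, ∑ l, w i j k l * (φ i + φ j - φ k - φ l) ≤ 0 :=
    sum_nonpos fun i _ => sum_nonpos fun j _ => sum_nonpos fun k _ => sum_nonpos fun l _ =>
      hterm i j k l
  linarith

lemma hasDerivAt_sum_mul_muF {ι : Type*} [Fintype ι] {α : ℝ} (c : ι → ℝ)
    {F : ℝ → ι → ℝ} {F' : ι → ℝ} {x : ℝ} (hF : ∀ i, HasDerivAt (fun t => F t i) (F' i) x)
    (h₀ : ∀ i, F x i ≠ 0) (h₁ : ∀ i, 0 < 1 - α * F x i) (h₂ : ∀ i, 0 < 1 + (1 - α) * F x i) :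
    HasDerivAt (fun t => ∑ i, c i * muF α (F t i))
      (∑ i, c i * (log (F x i / Psi α (F x i)) * F' i)) x :=
  HasDerivAt.fun_sum fun i _ => (hasDerivAt_muF_comp (hF i) (h₀ i) (h₁ i) (h₂ i)).const_mul (c i)

theorem stmt10_general {N d : ℕ} (hd : 0 < d)
    (α : ℝ) (hα0 : 0 < α) (hα1 : α < 1)
    (p : Fin N → Fin d → ℝ) (Γ : Fin N → Fin N → Fin N → Fin N → ℝ)
    (hΓ : GammaOK p Γ)
    (F F' : ℝ → Fin N → ℝ)
    (hpos : ∀ x ∈ Set.Ioi (0 : ℝ), ∀ i, 0 < F x i ∧ F x i < 1 / α)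
    (hdiff : ∀ x ∈ Set.Ioi (0 : ℝ), ∀ i, HasDerivAt (fun t => F t i) (F' x i) x)
    (heq : ∀ x ∈ Set.Ioi (0 : ℝ), ∀ i, p i ⟨0, hd⟩ * F' x i = Qop α Γ (F x) i) :
    (∀ x ∈ Set.Ioi (0 : ℝ),
      HasDerivAt (fun t => ∑ i, p i ⟨0, hd⟩ * muF α (F t i))
        (dotN (fun i => Real.log (F x i / Psi α (F x i))) (Qop α Γ (F x))) x ∧
      dotN (fun i => Real.log (F x i / Psi α (F x i))) (Qop α Γ (F x)) ≤ 0) ∧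
    AntitoneOn (fun x => ∑ i, p i ⟨0, hd⟩ * muF α (F x i)) (Set.Ioi 0) := by
  obtain ⟨hΓnn, hΓswap, hΓpairs, -⟩ := hΓ
  have h₁ : ∀ x ∈ Ioi (0 : ℝ), ∀ i, 0 < 1 - α * F x i := fun x hx i =>
    one_sub_mul_pos_of_lt_one_div hα0 (hpos x hx i).2
  have h₂ : ∀ x ∈ Ioi (0 : ℝ), ∀ i, 0 < 1 + (1 - α) * F x i := fun x hx i =>
    one_add_mul_pos_of_le_one hα1.le (hpos x hx i).1.le
  have hderiv : ∀ x ∈ Ioi (0 : ℝ), HasDerivAt (fun t => ∑ i, p i ⟨0, hd⟩ * muF α (F t i))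
      (dotN (fun i => log (F x i / Psi α (F x i))) (Qop α Γ (F x))) x := fun x hx => by
    refine (hasDerivAt_sum_mul_muF (fun i => p i ⟨0, hd⟩) (hdiff x hx)
      (fun i => (hpos x hx i).1.ne') (h₁ x hx) (h₂ x hx)).congr_deriv ?_
    exact sum_congr rfl fun i _ => by rw [← heq x hx i]; ring
  have hsign : ∀ x ∈ Ioi (0 : ℝ),
      dotN (fun i => log (F x i / Psi α (F x i))) (Qop α Γ (F x)) ≤ 0 := fun x hx =>
    dotN_log_div_Psi_Qop_nonpos hΓnn hΓswap hΓpairs (fun i => (hpos x hx i).1)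
      fun i => Psi_pos (h₁ x hx i) (h₂ x hx i)
  refine ⟨fun x hx => ⟨hderiv x hx, hsign x hx⟩, ?_⟩
  refine antitoneOn_of_hasDerivWithinAt_nonpos (convex_Ioi 0)
    (f' := fun x => dotN (fun i => log (F x i / Psi α (F x i))) (Qop α Γ (F x)))
    (fun x hx => (hderiv x hx).continuousAt.continuousWithinAt) (fun x hx => ?_) fun x hx => ?_
  · rw [interior_Ioi] at hx
    exact (hderiv x hx).hasDerivWithinAt
  · rw [interior_Ioi] at hx
    exact hsign x hx

/-- the modified H-functional is non-increasing along planar stationary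
solutions. -/
theorem stmt10 {N d : ℕ} (hN : 0 < N) (hd : 0 < d)
    (α : ℝ) (hα0 : 0 < α) (hα1 : α < 1)
    (p : Fin N → Fin d → ℝ) (Γ : Fin N → Fin N → Fin N → Fin N → ℝ)
    (hΓ : GammaOK p Γ)
    (F F' : ℝ → Fin N → ℝ)
    (hpos : ∀ x ∈ Set.Ioi (0 : ℝ), ∀ i, 0 < F x i ∧ F x i < 1 / α)
    (hdiff : ∀ x ∈ Set.Ioi (0 : ℝ), ∀ i, HasDerivAt (fun t => F t i) (F' x i) x)
    (heq : ∀ x ∈ Set.Ioi (0 : ℝ), ∀ i, p i ⟨0, hd⟩ * F' x i = Qop α Γ (F x) i) :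
    (∀ x ∈ Set.Ioi (0 : ℝ),
      HasDerivAt (fun t => ∑ i, p i ⟨0, hd⟩ * muF α (F t i))
        (dotN (fun i => Real.log (F x i / Psi α (F x i))) (Qop α Γ (F x))) x ∧
      dotN (fun i => Real.log (F x i / Psi α (F x i))) (Qop α Γ (F x)) ≤ 0) ∧
    AntitoneOn (fun x => ∑ i, p i ⟨0, hd⟩ * muF α (F x i)) (Set.Ioi 0) :=
  stmt10_general hd α hα0 hα1 p Γ hΓ F F' hpos hdiff heq
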